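/- For any two distinct disjoint smooth conics L_{q,m} and L_{q',m'} in F, there is a unique curve L of bidegree (1,0) meeting both and a unique curve R of bidegree (0,1) meeting both; explicitly L = π₂⁻¹(q × q') and R = π₁⁻¹(m × m'), where × is the cross product. -/
import Mathlib


open scoped BigOperators

noncomputable section

/-- The complex projective plane. -/
abbrev P2 := Projectivization ℂ (Fin 3 → ℂ)

/-- The bilinear incidence pairing. -/
def dotc (v w : Fin 3 → ℂ) : ℂ := ∑ i, v i * w i

/-- The flag threefold `F = {(p,ℓ) ∈ ℙ² × ℙ² : pℓ = 0}`. -/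
def FlagThreefold : Set (P2 × P2) := {x | dotc x.1.rep x.2.rep = 0}

/-- The bidegree `(1,1)` curve `L_{q,m} = {(p,ℓ) ∈ F : pm = 0, qℓ = 0}`. -/
def conicL (q m : Fin 3 → ℂ) : Set (P2 × P2) :=
  {x | x ∈ FlagThreefold ∧ dotc x.1.rep m = 0 ∧ dotc q x.2.rep = 0}

/-- The fiber of `π₁(p,ℓ) = p` over `a`, a curve of bidegree `(0,1)`. -/
def fiber1 (a : P2) : Set (P2 × P2) := {x | x ∈ FlagThreefold ∧ x.1 = a}

/-- The fiber of `π₂(p,ℓ) = ℓ` over `b`, a curve of bidegree `(1,0)`. -/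
def fiber2 (b : P2) : Set (P2 × P2) := {x | x ∈ FlagThreefold ∧ x.2 = b}

/-- Coordinatewise complex conjugation on `ℙ²`. -/
def conjP (P : P2) : P2 :=
  Projectivization.mk ℂ (fun i => starRingEnd ℂ (P.rep i))
    (fun h => P.rep_nonzero (funext fun i => by simpa using congrFun h i))

/-- The twistor involution `j(p,ℓ) = (ℓ̄, p̄)`. -/
def jmap (x : P2 × P2) : P2 × P2 := (conjP x.2, conjP x.1)

/-- The cross product of homogeneous coordinate vectors. -/
def cross3 (v w : Fin 3 → ℂ) : Fin 3 → ℂ :=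
  ![v 1 * w 2 - v 2 * w 1, v 2 * w 0 - v 0 * w 2, v 0 * w 1 - v 1 * w 0]

/-! ### Auxiliary lemmas -/

lemma dotc_expand (v w : Fin 3 → ℂ) : dotc v w = v 0 * w 0 + v 1 * w 1 + v 2 * w 2 := by
  simp [dotc, Fin.sum_univ_three]

lemma dotc_comm (v w : Fin 3 → ℂ) : dotc v w = dotc w v := by
  simp only [dotc_expand]; ring

lemma dotc_smul_left (c : ℂ) (v w : Fin 3 → ℂ) : dotc (c • v) w = c * dotc v w := by
  simp only [dotc_expand, Pi.smul_apply, smul_eq_mul]; ring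

lemma dotc_smul_right (c : ℂ) (v w : Fin 3 → ℂ) : dotc v (c • w) = c * dotc v w := by
  simp only [dotc_expand, Pi.smul_apply, smul_eq_mul]; ring

lemma dotc_cross_left (v w : Fin 3 → ℂ) : dotc (cross3 v w) v = 0 := by
  simp [dotc_expand, cross3]; ring

lemma dotc_cross_right (v w : Fin 3 → ℂ) : dotc (cross3 v w) w = 0 := by
  simp [dotc_expand, cross3]; ring

lemma cross_eq_zero {v w : Fin 3 → ℂ} (hv : v ≠ 0) (hw : w ≠ 0)
    (h : cross3 v w = 0) : ∃ c : ℂ, c ≠ 0 ∧ w = c • v := by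
  have h0 := congrFun h 0
  have h1 := congrFun h 1
  have h2 := congrFun h 2
  simp [cross3] at h0 h1 h2
  have key : ∀ j k : Fin 3, v j * w k = v k * w j := by
    intro j k
    fin_cases j <;> fin_cases k
    · ring
    · show v 0 * w 1 = v 1 * w 0; linear_combination h2
    · show v 0 * w 2 = v 2 * w 0; linear_combination -h1
    · show v 1 * w 0 = v 0 * w 1; linear_combination -h2
    · ring
    · show v 1 * w 2 = v 2 * w 1; linear_combination h0
    · show v 2 * w 0 = v 0 * w 2; linear_combination h1
    · show v 2 * w 1 = v 1 * w 2; linear_combination -h0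
    · ring
  obtain ⟨i, hi⟩ := Function.ne_iff.mp hv
  simp only [Pi.zero_apply] at hi
  have hwi : w i ≠ 0 := by
    intro hwi
    apply hw
    funext j
    have hk : v i * w j = 0 := by rw [key i j, hwi, mul_zero]
    simpa using (mul_eq_zero.mp hk).resolve_left hi
  refine ⟨w i / v i, div_ne_zero hwi hi, ?_⟩
  funext j
  have hk := key i j
  simp only [Pi.smul_apply, smul_eq_mul]
  field_simp
  linear_combination hk

lemma triple_prod (b v w : Fin 3 → ℂ) :
    cross3 b (cross3 v w) = dotc b w • v - dotc b v • w := by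
  funext j
  fin_cases j <;> simp [cross3, dotc_expand] <;> ring

lemma perp_perp {v w b : Fin 3 → ℂ} (h : cross3 v w ≠ 0) (hb : b ≠ 0)
    (h1 : dotc b v = 0) (h2 : dotc b w = 0) :
    ∃ c : ℂ, c ≠ 0 ∧ b = c • cross3 v w := by
  have htp : cross3 b (cross3 v w) = 0 := by
    rw [triple_prod, h1, h2]; simp
  obtain ⟨c, hc, hcw⟩ := cross_eq_zero hb h htp
  refine ⟨c⁻¹, inv_ne_zero hc, ?_⟩
  rw [hcw, smul_smul, inv_mul_cancel₀ hc, one_smul]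

lemma exists_perp_one (w : Fin 3 → ℂ) : ∃ p : Fin 3 → ℂ, p ≠ 0 ∧ dotc p w = 0 := by
  by_cases hw : w = 0
  · refine ⟨![1, 0, 0], ?_, ?_⟩
    · intro h
      have := congrFun h 0
      simp at this
    · simp [hw, dotc]
  · obtain ⟨i, hi⟩ := Function.ne_iff.mp hw
    simp only [Pi.zero_apply] at hi
    fin_cases i
    · refine ⟨![w 1, -w 0, 0], ?_, ?_⟩
      · intro h
        have := congrFun h 1
        simp at this
        exact hi this
      · simp [dotc_expand]; ring
    · refine ⟨![w 1, -w 0, 0], ?_, ?_⟩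
      · intro h
        have := congrFun h 0
        simp at this
        exact hi this
      · simp [dotc_expand]; ring
    · refine ⟨![w 2, 0, -w 0], ?_, ?_⟩
      · intro h
        have := congrFun h 0
        simp at this
        exact hi this
      · simp [dotc_expand]; ring

lemma exists_perp (v w : Fin 3 → ℂ) :
    ∃ p : Fin 3 → ℂ, p ≠ 0 ∧ dotc p v = 0 ∧ dotc p w = 0 := by
  by_cases hvw : cross3 v w = 0
  · by_cases hv : v = 0
    · obtain ⟨p, hp, hpw⟩ := exists_perp_one w
      exact ⟨p, hp, by simp [hv, dotc], hpw⟩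
    · by_cases hw : w = 0
      · obtain ⟨p, hp, hpv⟩ := exists_perp_one v
        exact ⟨p, hp, hpv, by simp [hw, dotc]⟩
      · obtain ⟨c, hc, hcw⟩ := cross_eq_zero hv hw hvw
        obtain ⟨p, hp, hpv⟩ := exists_perp_one v
        exact ⟨p, hp, hpv, by rw [hcw, dotc_smul_right, hpv, mul_zero]⟩
  · exact ⟨cross3 v w, hvw, dotc_cross_left v w, dotc_cross_right v w⟩

lemma rep_smul (v : Fin 3 → ℂ) (hv : v ≠ 0) :
    ∃ c : ℂ, c ≠ 0 ∧ (Projectivization.mk ℂ v hv).rep = c • v := by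
  obtain ⟨a, ha⟩ := Projectivization.exists_smul_eq_mk_rep ℂ v hv
  exact ⟨(a : ℂ), a.ne_zero, by rw [← ha, Units.smul_def]⟩

lemma eq_mk_of_perp {v w : Fin 3 → ℂ} (b : P2) (h : cross3 v w ≠ 0)
    (h1 : dotc v b.rep = 0) (h2 : dotc w b.rep = 0) :
    b = Projectivization.mk ℂ (cross3 v w) h := by
  obtain ⟨c, hc, hcb⟩ := perp_perp h b.rep_nonzero
    (by rw [dotc_comm]; exact h1) (by rw [dotc_comm]; exact h2)
  conv_lhs => rw [← b.mk_rep]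
  rw [Projectivization.mk_eq_mk_iff']
  exact ⟨c, hcb.symm⟩

lemma conicL_smul {c d : ℂ} (q m : Fin 3 → ℂ) (hc : c ≠ 0) (hd : d ≠ 0) :
    conicL (c • q) (d • m) = conicL q m := by
  ext x
  simp [conicL, dotc_smul_left, dotc_smul_right, hc, hd]

lemma mem_conicL_mk_both {p l : Fin 3 → ℂ} (q m : Fin 3 → ℂ) (hp : p ≠ 0) (hl : l ≠ 0)
    (h1 : dotc p l = 0) (h2 : dotc p m = 0) (h3 : dotc q l = 0) :
    (Projectivization.mk ℂ p hp, Projectivization.mk ℂ l hl) ∈ conicL q m := by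
  obtain ⟨c, hc, hcp⟩ := rep_smul p hp
  obtain ⟨d, hd, hdl⟩ := rep_smul l hl
  refine ⟨?_, ?_, ?_⟩
  · show dotc _ _ = 0
    rw [hcp, hdl, dotc_smul_left, dotc_smul_right, h1]; ring
  · show dotc _ _ = 0
    rw [hcp, dotc_smul_left, h2, mul_zero]
  · show dotc _ _ = 0
    rw [hdl, dotc_smul_right, h3, mul_zero]

lemma mem_conicL_mk_left {p : Fin 3 → ℂ} (b : P2) (q m : Fin 3 → ℂ) (hp : p ≠ 0)
    (h1 : dotc p b.rep = 0) (h2 : dotc p m = 0) (h3 : dotc q b.rep = 0) :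
    (Projectivization.mk ℂ p hp, b) ∈ conicL q m := by
  obtain ⟨c, hc, hcp⟩ := rep_smul p hp
  refine ⟨?_, ?_, h3⟩
  · show dotc _ _ = 0
    rw [hcp, dotc_smul_left, h1, mul_zero]
  · show dotc _ _ = 0
    rw [hcp, dotc_smul_left, h2, mul_zero]

lemma mem_conicL_mk_right {l : Fin 3 → ℂ} (a : P2) (q m : Fin 3 → ℂ) (hl : l ≠ 0)
    (h1 : dotc a.rep l = 0) (h2 : dotc a.rep m = 0) (h3 : dotc q l = 0) :
    (a, Projectivization.mk ℂ l hl) ∈ conicL q m := by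
  obtain ⟨d, hd, hdl⟩ := rep_smul l hl
  refine ⟨?_, h2, ?_⟩
  · show dotc _ _ = 0
    rw [hdl, dotc_smul_right, h1, mul_zero]
  · show dotc _ _ = 0
    rw [hdl, dotc_smul_right, h3, mul_zero]

/-- For two distinct disjoint smooth conics `L_{q,m}` and `L_{q',m'}` in `F` there is a
unique bidegree `(1,0)` curve meeting both and a unique bidegree `(0,1)` curve meeting
both; explicitly they are `π₂⁻¹([q × q'])` and `π₁⁻¹([m × m'])`. -/
theorem unique_lines_meeting_two_disjoint_conics
    (q m q' m' : Fin 3 → ℂ) (hq : q ≠ 0) (hm : m ≠ 0) (hq' : q' ≠ 0) (hm' : m' ≠ 0)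
    (hqm : dotc q m ≠ 0) (hqm' : dotc q' m' ≠ 0)
    (hne : conicL q m ≠ conicL q' m')
    (hdisj : conicL q m ∩ conicL q' m' = ∅) :
    ∃ (h2 : cross3 q q' ≠ 0) (h1 : cross3 m m' ≠ 0),
      (∀ b : P2,
        ((fiber2 b ∩ conicL q m).Nonempty ∧ (fiber2 b ∩ conicL q' m').Nonempty) ↔
          b = Projectivization.mk ℂ (cross3 q q') h2) ∧
      (∀ a : P2,
        ((fiber1 a ∩ conicL q m).Nonempty ∧ (fiber1 a ∩ conicL q' m').Nonempty) ↔
          a = Projectivization.mk ℂ (cross3 m m') h1) := by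
  have h2 : cross3 q q' ≠ 0 := by
    intro hcr
    obtain ⟨c, hc, hq'eq⟩ := cross_eq_zero hq hq' hcr
    by_cases hmm : cross3 m m' = 0
    · obtain ⟨d, hd, hm'eq⟩ := cross_eq_zero hm hm' hmm
      exact hne (by rw [hq'eq, hm'eq, conicL_smul q m hc hd])
    · have hp : cross3 m m' ≠ 0 := hmm
      set p := cross3 m m' with hpdef
      have hpm : dotc p m = 0 := dotc_cross_left m m'
      have hpm' : dotc p m' = 0 := dotc_cross_right m m'
      have hpq : cross3 p q ≠ 0 := by
        intro h
        obtain ⟨e, he, hqe⟩ := cross_eq_zero hp hq h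
        apply hqm
        rw [hqe, dotc_smul_left, hpm, mul_zero]
      set l := cross3 p q with hldef
      have hpl : dotc p l = 0 := by rw [dotc_comm]; exact dotc_cross_left p q
      have hql : dotc q l = 0 := by rw [dotc_comm]; exact dotc_cross_right p q
      have mem1 := mem_conicL_mk_both q m hp hpq hpl hpm hql
      have mem2 := mem_conicL_mk_both q' m' hp hpq hpl hpm'
        (by rw [hq'eq, dotc_smul_left, hql, mul_zero])
      have : (Projectivization.mk ℂ p hp, Projectivization.mk ℂ l hpq) ∈
          conicL q m ∩ conicL q' m' := ⟨mem1, mem2⟩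
      rw [hdisj] at this
      exact this
  have h1 : cross3 m m' ≠ 0 := by
    intro hmm
    obtain ⟨d, hd, hm'eq⟩ := cross_eq_zero hm hm' hmm
    have hl : cross3 q q' ≠ 0 := h2
    set l := cross3 q q' with hldef
    have hql : dotc q l = 0 := by rw [dotc_comm]; exact dotc_cross_left q q'
    have hq'l : dotc q' l = 0 := by rw [dotc_comm]; exact dotc_cross_right q q'
    have hlm : cross3 l m ≠ 0 := by
      intro h
      obtain ⟨e, he, hme⟩ := cross_eq_zero hl hm h
      apply hqm
      rw [hme, dotc_smul_right, hql, mul_zero]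
    set p := cross3 l m with hpdef
    have hpl : dotc p l = 0 := dotc_cross_left l m
    have hpm : dotc p m = 0 := dotc_cross_right l m
    have mem1 := mem_conicL_mk_both q m hlm hl hpl hpm hql
    have mem2 := mem_conicL_mk_both q' m' hlm hl hpl
      (by rw [hm'eq, dotc_smul_right, hpm, mul_zero]) hq'l
    have : (Projectivization.mk ℂ p hlm, Projectivization.mk ℂ l hl) ∈
        conicL q m ∩ conicL q' m' := ⟨mem1, mem2⟩
    rw [hdisj] at this
    exact this
  refine ⟨h2, h1, ?_, ?_⟩
  · intro b
    constructor
    · rintro ⟨⟨x, ⟨hxF, hxb⟩, hx⟩, ⟨y, ⟨hyF, hyb⟩, hy⟩⟩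
      have hqb : dotc q b.rep = 0 := by rw [← hxb]; exact hx.2.2
      have hq'b : dotc q' b.rep = 0 := by rw [← hyb]; exact hy.2.2
      exact eq_mk_of_perp b h2 hqb hq'b
    · rintro rfl
      set b := Projectivization.mk ℂ (cross3 q q') h2 with hbdef
      obtain ⟨c, hc, hcb⟩ := rep_smul (cross3 q q') h2
      have hqb : dotc q b.rep = 0 := by
        rw [hbdef, hcb, dotc_smul_right, dotc_comm, dotc_cross_left, mul_zero]
      have hq'b : dotc q' b.rep = 0 := by
        rw [hbdef, hcb, dotc_smul_right, dotc_comm, dotc_cross_right, mul_zero]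
      obtain ⟨p, hp, hpb, hpm⟩ := exists_perp b.rep m
      obtain ⟨p', hp', hp'b, hp'm⟩ := exists_perp b.rep m'
      constructor
      · have mem := mem_conicL_mk_left b q m hp hpb hpm hqb
        exact ⟨(Projectivization.mk ℂ p hp, b), ⟨mem.1, rfl⟩, mem⟩
      · have mem := mem_conicL_mk_left b q' m' hp' hp'b hp'm hq'b
        exact ⟨(Projectivization.mk ℂ p' hp', b), ⟨mem.1, rfl⟩, mem⟩
  · intro a
    constructor
    · rintro ⟨⟨x, ⟨hxF, hxa⟩, hx⟩, ⟨y, ⟨hyF, hya⟩, hy⟩⟩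
      have hma : dotc m a.rep = 0 := by rw [dotc_comm, ← hxa]; exact hx.2.1
      have hm'a : dotc m' a.rep = 0 := by rw [dotc_comm, ← hya]; exact hy.2.1
      exact eq_mk_of_perp a h1 hma hm'a
    · rintro rfl
      set a := Projectivization.mk ℂ (cross3 m m') h1 with hadef
      obtain ⟨c, hc, hca⟩ := rep_smul (cross3 m m') h1
      have ham : dotc a.rep m = 0 := by
        rw [hadef, hca, dotc_smul_left, dotc_cross_left, mul_zero]
      have ham' : dotc a.rep m' = 0 := by
        rw [hadef, hca, dotc_smul_left, dotc_cross_right, mul_zero]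
      obtain ⟨l, hl, hla, hlq⟩ := exists_perp a.rep q
      obtain ⟨l', hl', hl'a, hl'q⟩ := exists_perp a.rep q'
      constructor
      · have mem := mem_conicL_mk_right a q m hl
          (by rw [dotc_comm]; exact hla) ham (by rw [dotc_comm]; exact hlq)
        exact ⟨(a, Projectivization.mk ℂ l hl), ⟨mem.1, rfl⟩, mem⟩
      · have mem := mem_conicL_mk_right a q' m' hl'
          (by rw [dotc_comm]; exact hl'a) ham' (by rw [dotc_comm]; exact hl'q)
        exact ⟨(a, Projectivization.mk ℂ l' hl'), ⟨mem.1, rfl⟩, mem⟩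

end
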